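/- arXiv:1510.02030 — 6 statements merged into one kernel-verified Lean document; each statement's English description precedes it below -/
import Mathlib

section
/- Let V_ω : [0, r₁ - r₂] → (0,∞) be a smooth strictly decreasing function, k ≥ 0, and λ > 0. Suppose Φ : [0, r₁ - r₂] → ℝ is a smooth nonzero function with Φ(0) = Φ(r₁ - r₂) = 0 satisfying (V_ω Φ')' = k² Φ / V_ω − λ V_ω Φ. Then for every root z of Φ in [0, r₁ - r₂), one has k / √λ < V_ω(z). In particular k/√λ < V_ω(0). -/
open Set MeasureTheory

private lemma aux_bound (a b c e : ℝ) (h1 : -e ≤ c) (h2 : c ≤ e) :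
    |2 * a * b * c| ≤ e * (a ^ 2 + b ^ 2) := by
  rw [abs_le]
  constructor
  · nlinarith [mul_nonneg (by linarith : (0:ℝ) ≤ e - c) (sq_nonneg (a - b)),
      mul_nonneg (by linarith : (0:ℝ) ≤ e + c) (sq_nonneg (a + b))]
  · nlinarith [mul_nonneg (by linarith : (0:ℝ) ≤ e - c) (sq_nonneg (a + b)),
      mul_nonneg (by linarith : (0:ℝ) ≤ e + c) (sq_nonneg (a - b))]

set_option maxHeartbeats 1000000

/-- The value `μ₀ = k/√λ` is strictly below the weight `V_ω` at any root of the
Dirichlet eigenfunction `Φ` in `[0, r₁ - r₂)`. -/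
theorem stmt0 (r₁ r₂ k lam : ℝ) (V Φ : ℝ → ℝ)
    (hr : r₂ < r₁) (hk : 0 ≤ k) (hlam : 0 < lam)
    (hV : ContDiff ℝ (⊤ : ℕ∞) V) (hVpos : ∀ t ∈ Icc 0 (r₁ - r₂), 0 < V t)
    (hVanti : StrictAntiOn V (Icc 0 (r₁ - r₂)))
    (hΦ : ContDiff ℝ (⊤ : ℕ∞) Φ) (hΦ0 : Φ 0 = 0) (hΦL : Φ (r₁ - r₂) = 0)
    (hΦne : ∃ t ∈ Icc 0 (r₁ - r₂), Φ t ≠ 0)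
    (hODE : ∀ t ∈ Icc 0 (r₁ - r₂),
      deriv (fun s => V s * deriv Φ s) t = k ^ 2 * Φ t / V t - lam * V t * Φ t) :
    (∀ z ∈ Ico 0 (r₁ - r₂), Φ z = 0 → k / Real.sqrt lam < V z) ∧
      k / Real.sqrt lam < V 0 := by
  have hL : 0 < r₁ - r₂ := sub_pos.mpr hr
  set L : ℝ := r₁ - r₂ with hLdef
  have hΦd : Differentiable ℝ Φ := hΦ.differentiable (by simp)
  have hΦ' : ContDiff ℝ (⊤:ℕ∞) (deriv Φ) := (contDiff_infty_iff_deriv.mp (hΦ.of_le (by simp))).2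
  have hΦ'd : Differentiable ℝ (deriv Φ) := hΦ'.differentiable (by simp)
  have hVd : Differentiable ℝ V := hV.differentiable (by simp)
  have hWd : Differentiable ℝ (fun s => V s * deriv Φ s) := hVd.mul hΦ'd
  have hsq : Real.sqrt lam ^ 2 = lam := Real.sq_sqrt hlam.le
  have hsqpos : 0 < Real.sqrt lam := Real.sqrt_pos.mpr hlam
  -- min and max of V on [0, L]
  have h0mem : (0:ℝ) ∈ Icc 0 L := ⟨le_refl 0, hL.le⟩
  have hLmem : L ∈ Icc 0 L := ⟨hL.le, le_refl L⟩
  set m : ℝ := V L with hmdef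
  set M : ℝ := V 0 with hMdef
  have hmpos : 0 < m := hVpos L hLmem
  have hm : ∀ t ∈ Icc 0 L, m ≤ V t := fun t ht =>
    (hVanti.antitoneOn ht hLmem ht.2)
  have hM : ∀ t ∈ Icc 0 L, V t ≤ M := fun t ht =>
    (hVanti.antitoneOn h0mem ht ht.1)
  have hMpos : 0 < M := hVpos 0 h0mem
  set C : ℝ := k ^ 2 / m + lam * M + 1 / m with hCdef
  have hCpos : 0 < C := by positivity
  -- the derivative of G = V·Φ'·Φ
  have hderivG : ∀ t ∈ Icc 0 L,
      deriv (fun s => V s * deriv Φ s * Φ s) t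
        = (k ^ 2 / V t - lam * V t) * Φ t ^ 2 + V t * (deriv Φ t) ^ 2 := by
    intro t ht
    have h1 : HasDerivAt (fun s => V s * deriv Φ s * Φ s)
        (deriv (fun s => V s * deriv Φ s) t * Φ t + (V t * deriv Φ t) * deriv Φ t) t :=
      ((hWd t).hasDerivAt).mul ((hΦd t).hasDerivAt)
    rw [h1.deriv, hODE t ht]
    have hVne : V t ≠ 0 := (hVpos t ht).ne'
    field_simp
  -- derivative of the energy E
  set E : ℝ → ℝ := fun t => (V t * deriv Φ t) ^ 2 + Φ t ^ 2 with hEdef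
  have hEderiv : ∀ t, HasDerivAt E
      (2 * (V t * deriv Φ t) * deriv (fun s => V s * deriv Φ s) t + 2 * Φ t * deriv Φ t) t := by
    intro t
    have h1 := (((hWd t).hasDerivAt).pow 2).add (((hΦd t).hasDerivAt).pow 2)
    refine h1.congr_deriv ?_
    push_cast
    ring
  have hEd : Differentiable ℝ E := fun t => ((hEderiv t).differentiableAt)
  have hEnonneg : ∀ t, 0 ≤ E t := fun t => by positivity
  -- abs bound on deriv E over [0, L]
  have habs : ∀ t ∈ Icc 0 L, |deriv E t| ≤ C * E t := by
    intro t ht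
    have hVt := hVpos t ht
    have hVne : V t ≠ 0 := hVt.ne'
    have hmt := hm t ht
    have hMt := hM t ht
    have hEeq : deriv E t
        = 2 * (V t * deriv Φ t) * Φ t * (k ^ 2 / V t - lam * V t + 1 / V t) := by
      rw [(hEderiv t).deriv, hODE t ht]
      field_simp
    have hd1 : k ^ 2 / V t - lam * V t + 1 / V t ≤ C := by
      have e1 : k ^ 2 / V t ≤ k ^ 2 / m := by
        apply div_le_div_of_nonneg_left (by positivity) hmpos hmt
      have e2 : 1 / V t ≤ 1 / m := by
        apply div_le_div_of_nonneg_left (by norm_num) hmpos hmt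
      have e3 : 0 ≤ lam * V t := by positivity
      rw [hCdef]; nlinarith
    have hd2 : -C ≤ k ^ 2 / V t - lam * V t + 1 / V t := by
      have e1 : 0 ≤ k ^ 2 / V t := by positivity
      have e2 : 0 ≤ 1 / V t := by positivity
      have e3 : lam * V t ≤ lam * M := by nlinarith
      have e4 : 0 ≤ k ^ 2 / m := by positivity
      have e5 : 0 ≤ 1 / m := by positivity
      rw [hCdef]; nlinarith
    have hEt : E t = (V t * deriv Φ t) ^ 2 + Φ t ^ 2 := rfl
    rw [hEeq, hEt]
    exact aux_bound (V t * deriv Φ t) (Φ t) _ C hd2 hd1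
  -- main claim
  have key : ∀ z ∈ Ico 0 L, Φ z = 0 → k / Real.sqrt lam < V z := by
    rintro z ⟨hz0, hzL⟩ hΦz
    by_contra hcon
    push_neg at hcon
    have hzmem : z ∈ Icc 0 L := ⟨hz0, hzL.le⟩
    have hVzk : V z * Real.sqrt lam ≤ k := by
      rwa [← le_div_iff₀ hsqpos]
    -- G is monotone on [z, L]
    have hGdiff : Differentiable ℝ (fun s => V s * deriv Φ s * Φ s) := hWd.mul hΦd
    have hsub : Icc z L ⊆ Icc 0 L := Icc_subset_Icc hz0 (le_refl L)
    have hcoef : ∀ t ∈ Icc z L, 0 ≤ k ^ 2 / V t - lam * V t := by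
      intro t ht
      have htm : t ∈ Icc 0 L := hsub ht
      have hVt := hVpos t htm
      have hVle : V t ≤ V z := hVanti.antitoneOn hzmem htm ht.1
      have h1 : V t * Real.sqrt lam ≤ k := le_trans (by nlinarith) hVzk
      have h3 := mul_self_le_mul_self (by positivity : (0:ℝ) ≤ V t * Real.sqrt lam) h1
      have h2 : lam * V t ^ 2 ≤ k ^ 2 := by
        calc lam * V t ^ 2 = (Real.sqrt lam * Real.sqrt lam) * V t ^ 2 := by
              rw [Real.mul_self_sqrt hlam.le]
          _ = (V t * Real.sqrt lam) * (V t * Real.sqrt lam) := by ring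
          _ ≤ k * k := h3
          _ = k ^ 2 := (sq k).symm
      have : lam * V t ≤ k ^ 2 / V t := by
        rw [le_div_iff₀ hVt]; nlinarith
      linarith
    have hmono : MonotoneOn (fun s => V s * deriv Φ s * Φ s) (Icc z L) := by
      apply monotoneOn_of_deriv_nonneg (convex_Icc z L)
        hGdiff.continuous.continuousOn hGdiff.differentiableOn
      intro t ht
      rw [interior_Icc] at ht
      have htm : t ∈ Icc z L := Ioo_subset_Icc_self ht
      rw [hderivG t (hsub htm)]
      have := hcoef t htm
      have := hVpos t (hsub htm)
      positivity
    have hGz : V z * deriv Φ z * Φ z = 0 := by rw [hΦz]; ring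
    have hGL : V L * deriv Φ L * Φ L = 0 := by rw [hΦL]; ring
    have hzmemI : z ∈ Icc z L := ⟨le_refl z, hzL.le⟩
    have hLmemI : L ∈ Icc z L := ⟨hzL.le, le_refl L⟩
    have hG0 : ∀ t ∈ Icc z L, V t * deriv Φ t * Φ t = 0 := by
      intro t ht
      have h1 := hmono hzmemI ht ht.1
      have h2 := hmono ht hLmemI ht.2
      simp only at h1 h2
      rw [hGz] at h1; rw [hGL] at h2
      linarith
    -- Φ vanishes on [z, L]
    have hΦzero1 : ∀ t ∈ Icc z L, Φ t = 0 := by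
      intro t ht
      rcases eq_or_lt_of_le ht.1 with h | hzt
      · rw [← h]; exact hΦz
      rcases eq_or_lt_of_le ht.2 with h | htL
      · rw [h]; exact hΦL
      have hnb : Ioo z L ∈ nhds t := Ioo_mem_nhds hzt htL
      have heq : (fun s => V s * deriv Φ s * Φ s) =ᶠ[nhds t] fun _ => (0:ℝ) :=
        Filter.eventuallyEq_of_mem hnb (fun x hx => hG0 x (Ioo_subset_Icc_self hx))
      have hdG0 : deriv (fun s => V s * deriv Φ s * Φ s) t = 0 := by
        rw [heq.deriv_eq, deriv_const]
      rw [hderivG t (hsub ht)] at hdG0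
      -- coefficient strictly positive at t
      have htm : t ∈ Icc 0 L := hsub ht
      have hVt := hVpos t htm
      have hVlt : V t < V z := hVanti hzmem htm hzt
      have h1 : V t * Real.sqrt lam < k := lt_of_lt_of_le (by nlinarith) hVzk
      have h3 := mul_self_lt_mul_self (by positivity : (0:ℝ) ≤ V t * Real.sqrt lam) h1
      have h2 : lam * V t ^ 2 < k ^ 2 := by
        calc lam * V t ^ 2 = (Real.sqrt lam * Real.sqrt lam) * V t ^ 2 := by
              rw [Real.mul_self_sqrt hlam.le]
          _ = (V t * Real.sqrt lam) * (V t * Real.sqrt lam) := by ring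
          _ < k * k := h3
          _ = k ^ 2 := (sq k).symm
      have hq : 0 < k ^ 2 / V t - lam * V t := by
        have : lam * V t < k ^ 2 / V t := by
          rw [lt_div_iff₀ hVt]; nlinarith
        linarith
      have hΦ2 : Φ t ^ 2 = 0 := by nlinarith [sq_nonneg (Φ t), sq_nonneg (deriv Φ t)]
      exact pow_eq_zero_iff two_ne_zero |>.mp hΦ2
    -- deriv Φ z = 0
    have hdΦz : deriv Φ z = 0 := by
      have hud : UniqueDiffWithinAt ℝ (Icc z L) z := (uniqueDiffOn_Icc hzL) z hzmemI
      have h1 : HasDerivWithinAt Φ (deriv Φ z) (Icc z L) z :=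
        (hΦd z).hasDerivAt.hasDerivWithinAt
      have h2 : HasDerivWithinAt Φ 0 (Icc z L) z :=
        (hasDerivWithinAt_const z (Icc z L) (0:ℝ)).congr (fun x hx => hΦzero1 x hx) hΦz
      rw [← h1.derivWithin hud, h2.derivWithin hud]
    -- energy vanishes at z
    have hEz : E z = 0 := by rw [hEdef]; simp [hΦz, hdΦz]
    -- backward Gronwall on [0, z]
    set F : ℝ → ℝ := fun t => E (z - t) with hFdef
    have hF' : ∀ t, HasDerivAt F (-(deriv E (z - t))) t := by
      intro t
      have hinner : HasDerivAt (fun x => z - x) (-1) t := by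
        simpa using (hasDerivAt_id t).const_sub z
      have := ((hEd (z - t)).hasDerivAt).comp t hinner
      simpa [hFdef, Function.comp_def] using this
    have hFcont : ContinuousOn F (Icc 0 z) :=
      (hEd.continuous.comp (by continuity)).continuousOn
    have hgron := norm_le_gronwallBound_of_norm_deriv_right_le (f := F)
      (f' := fun x => -(deriv E (z - x))) (δ := 0) (K := C) (ε := 0) (a := 0) (b := z)
      hFcont (fun x _ => (hF' x).hasDerivWithinAt)
      (by simp [hFdef, sub_zero, hEz])
      (by
        intro x hx
        have hzx : z - x ∈ Icc 0 L := ⟨by linarith [hx.1, hx.2], by linarith [hx.1, hzL.le]⟩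
        have h1 := habs (z - x) hzx
        have hEnn := hEnonneg (z - x)
        have hFx : F x = E (z - x) := rfl
        rw [Real.norm_eq_abs, Real.norm_eq_abs, abs_neg, hFx, abs_of_nonneg hEnn, add_zero]
        exact h1)
    have hΦzero2 : ∀ t ∈ Icc 0 z, Φ t = 0 := by
      intro t ht
      have hx : z - t ∈ Icc (0:ℝ) z := ⟨by linarith [ht.2], by linarith [ht.1]⟩
      have := hgron (z - t) hx
      rw [gronwallBound_ε0_δ0] at this
      have hFt : F (z - t) = E t := by simp [hFdef]
      have hE0 : E t = 0 := by
        rw [hFt, Real.norm_eq_abs, abs_of_nonneg (hEnonneg t)] at this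
        linarith [hEnonneg t]
      have hE0' : (V t * deriv Φ t) ^ 2 + Φ t ^ 2 = 0 := hE0
      have hsq0 : Φ t ^ 2 = 0 := by nlinarith [sq_nonneg (V t * deriv Φ t)]
      exact pow_eq_zero_iff (two_ne_zero) |>.mp hsq0
    obtain ⟨t, ht, htne⟩ := hΦne
    apply htne
    rcases le_or_gt t z with h | h
    · exact hΦzero2 t ⟨ht.1, h⟩
    · exact hΦzero1 t ⟨h.le, ht.2⟩
  exact ⟨key, key 0 ⟨le_refl 0, hL⟩ hΦ0⟩
end

section
/- Let V_ω : [0,L] → (0,∞) be smooth with V_ω' < 0 on [0,L), k ≥ 0, λ > 0, and let Φ be a smooth function, positive on (0,L), with Φ(0)=Φ(L)=0, satisfying (V_ω Φ')' = k²Φ/V_ω − λ V_ω Φ. Define Y = V_ω Φ'/Φ on (0,L). Then Y satisfies the Riccati equation Y' = k²/V_ω − λ V_ω − Y²/V_ω, and Y' < 0 throughout (0,L). -/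
open Set MeasureTheory

/-- The Riccati function `Y = V_ω Φ'/Φ` of the first Dirichlet eigenfunction
satisfies `Y' = k²/V_ω − λ V_ω − Y²/V_ω` and is strictly decreasing on `(0,L)`. -/
theorem stmt1 (L k lam : ℝ) (V Φ : ℝ → ℝ)
    (hL : 0 < L) (hk : 0 ≤ k) (hlam : 0 < lam)
    (hV : ContDiff ℝ (⊤ : ℕ∞) V) (hVpos : ∀ t ∈ Icc 0 L, 0 < V t)
    (hV' : ∀ t ∈ Ico 0 L, deriv V t < 0)
    (hΦ : ContDiff ℝ (⊤ : ℕ∞) Φ) (hΦpos : ∀ t ∈ Ioo 0 L, 0 < Φ t)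
    (hΦ0 : Φ 0 = 0) (hΦL : Φ L = 0)
    (hODE : ∀ t ∈ Icc 0 L,
      deriv (fun s => V s * deriv Φ s) t = k ^ 2 * Φ t / V t - lam * V t * Φ t) :
    ∀ t ∈ Ioo 0 L,
      deriv (fun s => V s * deriv Φ s / Φ s) t
          = k ^ 2 / V t - lam * V t - (V t * deriv Φ t / Φ t) ^ 2 / V t ∧
        deriv (fun s => V s * deriv Φ s / Φ s) t < 0 := by
  have hVd : Differentiable ℝ V := hV.differentiable (by simp)
  have hΦd : Differentiable ℝ Φ := hΦ.differentiable (by simp)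
  have hΦ'd : Differentiable ℝ (deriv Φ) :=
    ((contDiff_infty_iff_deriv.1 (hΦ.of_le (by simp))).2).differentiable (by simp)
  have hud : Differentiable ℝ (fun s => V s * deriv Φ s) := hVd.mul hΦ'd
  -- the auxiliary function g
  set g : ℝ → ℝ :=
    fun s => (V s * deriv Φ s) ^ 2 + (lam * V s ^ 2 - k ^ 2) * Φ s ^ 2 with hg_def
  have hgd : Differentiable ℝ g := by
    apply (hud.pow 2).add
    exact (((hVd.pow 2).const_mul lam).sub_const _).mul (hΦd.pow 2)
  -- derivative of g on the interior
  have hg' : ∀ t ∈ Ioo 0 L, deriv g t = 2 * lam * V t * deriv V t * Φ t ^ 2 := by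
    intro t ht
    have htI : t ∈ Icc 0 L := ⟨ht.1.le, ht.2.le⟩
    have hVne : V t ≠ 0 := (hVpos t htI).ne'
    have hu' : HasDerivAt (fun s => V s * deriv Φ s)
        (k ^ 2 * Φ t / V t - lam * V t * Φ t) t := by
      have h := (hud t).hasDerivAt
      rwa [hODE t htI] at h
    have hVt : HasDerivAt V (deriv V t) t := (hVd t).hasDerivAt
    have hΦt : HasDerivAt Φ (deriv Φ t) t := (hΦd t).hasDerivAt
    have hg := (hu'.pow 2).add
      ((((hVt.pow 2).const_mul lam).sub_const (k ^ 2)).mul (hΦt.pow 2))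
    rw [hg_def, (show HasDerivAt (fun s => (V s * deriv Φ s) ^ 2 + (lam * V s ^ 2 - k ^ 2) * Φ s ^ 2) _ t from hg).deriv]
    field_simp
    simp only [Pi.pow_apply]
    ring
  -- g is strictly decreasing on [0, L]
  have hanti : StrictAntiOn g (Icc 0 L) := by
    apply strictAntiOn_of_deriv_neg (convex_Icc 0 L) hgd.continuous.continuousOn
    intro t ht
    rw [interior_Icc] at ht
    rw [hg' t ht]
    have h1 : deriv V t < 0 := hV' t ⟨ht.1.le, ht.2⟩
    have h2 : 0 < V t := hVpos t ⟨ht.1.le, ht.2.le⟩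
    have h3 : 0 < Φ t := hΦpos t ht
    have h4 : (2 * lam * V t * Φ t ^ 2) * deriv V t < 0 :=
      mul_neg_of_pos_of_neg (by positivity) h1
    nlinarith [h4]
  -- main argument
  intro t ht
  have htI : t ∈ Icc 0 L := ⟨ht.1.le, ht.2.le⟩
  have hVt0 : 0 < V t := hVpos t htI
  have hVne : V t ≠ 0 := hVt0.ne'
  have hΦt0 : 0 < Φ t := hΦpos t ht
  have hΦne : Φ t ≠ 0 := hΦt0.ne'
  -- positivity of g on (0, L)
  have hgL : g L = (V L * deriv Φ L) ^ 2 := by simp [hg_def, hΦL]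
  have hgLnn : 0 ≤ g L := by rw [hgL]; positivity
  have hgt : 0 < g t := by
    have := hanti htI (right_mem_Icc.2 hL.le) ht.2
    linarith
  -- the Riccati equation
  have hu' : HasDerivAt (fun s => V s * deriv Φ s)
      (k ^ 2 * Φ t / V t - lam * V t * Φ t) t := by
    have h := (hud t).hasDerivAt
    rwa [hODE t htI] at h
  have hΦt : HasDerivAt Φ (deriv Φ t) t := (hΦd t).hasDerivAt
  have hY : HasDerivAt (fun s => V s * deriv Φ s / Φ s)
      (((k ^ 2 * Φ t / V t - lam * V t * Φ t) * Φ t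
        - V t * deriv Φ t * deriv Φ t) / Φ t ^ 2) t := hu'.div hΦt hΦne
  have hDeq : deriv (fun s => V s * deriv Φ s / Φ s) t
      = k ^ 2 / V t - lam * V t - (V t * deriv Φ t / Φ t) ^ 2 / V t := by
    rw [hY.deriv]
    field_simp
  refine ⟨hDeq, ?_⟩
  rw [hDeq]
  have hEq : k ^ 2 / V t - lam * V t - (V t * deriv Φ t / Φ t) ^ 2 / V t
      = -g t / (V t * Φ t ^ 2) := by
    rw [hg_def]
    field_simp
    ring
  rw [hEq]
  apply div_neg_of_neg_of_pos (by linarith) (by positivity)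
end

section
/- Under the hypotheses of the previous statement (V_ω smooth positive with V_ω' < 0 on (0,L), Φ a first Dirichlet eigenfunction positive on (0,L) with eigenvalue λ, Y = V_ω Φ'/Φ), the inequality Y(t)² > k² − λ V_ω(t)² holds for all t in (0,L). -/
open Set MeasureTheory

/-- The Riccati function `Y = V_ω Φ'/Φ` satisfies `Y² > k² − λ V_ω²` on `(0,L)`. -/
theorem stmt2 (L k lam : ℝ) (V Φ : ℝ → ℝ)
    (hL : 0 < L) (hk : 0 ≤ k) (hlam : 0 < lam)
    (hV : ContDiff ℝ (⊤ : ℕ∞) V) (hVpos : ∀ t ∈ Icc 0 L, 0 < V t)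
    (hV' : ∀ t ∈ Ioo 0 L, deriv V t < 0)
    (hΦ : ContDiff ℝ (⊤ : ℕ∞) Φ) (hΦpos : ∀ t ∈ Ioo 0 L, 0 < Φ t)
    (hΦ0 : Φ 0 = 0) (hΦL : Φ L = 0)
    (hODE : ∀ t ∈ Icc 0 L,
      deriv (fun s => V s * deriv Φ s) t = k ^ 2 * Φ t / V t - lam * V t * Φ t) :
    ∀ t ∈ Ioo 0 L,
      (V t * deriv Φ t / Φ t) ^ 2 > k ^ 2 - lam * (V t) ^ 2 := by
  have hVdiff : Differentiable ℝ V := hV.differentiable (by simp)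
  have hΦdiff : Differentiable ℝ Φ := hΦ.differentiable (by simp)
  have hΦ'diff : Differentiable ℝ (deriv Φ) :=
    ((contDiff_infty_iff_deriv.mp (hΦ.of_le (by simp))).2).differentiable (by simp)
  set W : ℝ → ℝ := fun s => V s * deriv Φ s with hWdef
  have hWdiff : Differentiable ℝ W := hVdiff.mul hΦ'diff
  set E : ℝ → ℝ :=
    fun s => lam * (V s) ^ 2 * (Φ s) ^ 2 + (V s * deriv Φ s) ^ 2 - k ^ 2 * (Φ s) ^ 2
    with hEdef
  have hEderiv : ∀ t, HasDerivAt E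
      (lam * (2 * V t * deriv V t) * (Φ t) ^ 2 + lam * (V t) ^ 2 * (2 * Φ t * deriv Φ t)
        + 2 * W t * deriv W t - k ^ 2 * (2 * Φ t * deriv Φ t)) t := by
    intro t
    have hVt : HasDerivAt V (deriv V t) t := (hVdiff t).hasDerivAt
    have hΦt : HasDerivAt Φ (deriv Φ t) t := (hΦdiff t).hasDerivAt
    have hWt : HasDerivAt W (deriv W t) t := (hWdiff t).hasDerivAt
    have h1 : HasDerivAt (fun s => lam * (V s) ^ 2 * (Φ s) ^ 2)
        (lam * (2 * V t * deriv V t) * (Φ t) ^ 2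
          + lam * (V t) ^ 2 * (2 * Φ t * deriv Φ t)) t := by
      have := ((hVt.fun_pow 2).const_mul lam).fun_mul (hΦt.fun_pow 2)
      exact this.congr_deriv (by ring)
    have h2 : HasDerivAt (fun s => (V s * deriv Φ s) ^ 2) (2 * W t * deriv W t) t := by
      have := hWt.fun_pow 2
      exact this.congr_deriv (by ring)
    have h3 : HasDerivAt (fun s => k ^ 2 * (Φ s) ^ 2) (k ^ 2 * (2 * Φ t * deriv Φ t)) t := by
      have := (hΦt.fun_pow 2).const_mul (k ^ 2)
      exact this.congr_deriv (by ring)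
    exact (h1.add h2).sub h3
  have hEd : ∀ t ∈ Ioo 0 L, deriv E t < 0 := by
    intro t ht
    have htI : t ∈ Icc 0 L := Ioo_subset_Icc_self ht
    have hVt := hVpos t htI
    have hΦt := hΦpos t ht
    have hODEt := hODE t htI
    rw [(hEderiv t).deriv]
    have : lam * (2 * V t * deriv V t) * (Φ t) ^ 2 + lam * (V t) ^ 2 * (2 * Φ t * deriv Φ t)
        + 2 * W t * deriv W t - k ^ 2 * (2 * Φ t * deriv Φ t)
        = 2 * lam * V t * deriv V t * (Φ t) ^ 2 := by
      rw [hWdef]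
      simp only
      rw [hODEt]
      field_simp
      ring
    rw [this]
    have hV'neg := hV' t ht
    nlinarith [mul_pos (mul_pos hlam hVt) (pow_pos hΦt 2)]
  have hAnti : StrictAntiOn E (Icc 0 L) := by
    apply strictAntiOn_of_deriv_neg (convex_Icc 0 L)
    · exact (Differentiable.continuous (fun t => (hEderiv t).differentiableAt)).continuousOn
    · rwa [interior_Icc]
  intro t ht
  have htI : t ∈ Icc 0 L := Ioo_subset_Icc_self ht
  have hLt : E t > E L := hAnti htI (right_mem_Icc.mpr hL.le) ht.2
  have hEL : 0 ≤ E L := by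
    simp only [hEdef, hΦL]; nlinarith [sq_nonneg (V L * deriv Φ L)]
  have hEt : 0 < E t := lt_of_le_of_lt hEL hLt
  have hΦt : 0 < Φ t := hΦpos t ht
  simp only [hEdef] at hEt
  rw [gt_iff_lt, div_pow, lt_div_iff₀ (by positivity : (0:ℝ) < (Φ t) ^ 2)]
  nlinarith
end

section
/- Let V_ω : [0,L] → (0,∞) be smooth with V_ω' < 0 on (0,L), and let Φ be a first Dirichlet eigenfunction of (V_ω Φ')' = k²Φ/V_ω − λ V_ω Φ, positive on (0,L), with Y = V_ω Φ'/Φ. If μ₀ = k/√λ satisfies V_ω(L) < μ₀ < V_ω(0), then Y(t) < 0 for all t in [V_ω⁻¹(μ₀), L). -/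
open Set MeasureTheory

/-- If `μ₀ = k/√λ` is a value of the strictly decreasing weight `V_ω`, attained at
`z = V_ω⁻¹(μ₀)`, then the Riccati function `Y = V_ω Φ'/Φ` is negative on `[z, L)`. -/
theorem stmt3 (L k lam z : ℝ) (V Φ : ℝ → ℝ)
    (hL : 0 < L) (hk : 0 ≤ k) (hlam : 0 < lam)
    (hV : ContDiff ℝ (⊤ : ℕ∞) V) (hVpos : ∀ t ∈ Icc 0 L, 0 < V t)
    (hV' : ∀ t ∈ Ioo 0 L, deriv V t < 0)
    (hΦ : ContDiff ℝ (⊤ : ℕ∞) Φ) (hΦpos : ∀ t ∈ Ioo 0 L, 0 < Φ t)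
    (hΦ0 : Φ 0 = 0) (hΦL : Φ L = 0)
    (hODE : ∀ t ∈ Icc 0 L,
      deriv (fun s => V s * deriv Φ s) t = k ^ 2 * Φ t / V t - lam * V t * Φ t)
    (hμlo : V L < k / Real.sqrt lam) (hμhi : k / Real.sqrt lam < V 0)
    (hz : z ∈ Icc 0 L) (hVz : V z = k / Real.sqrt lam) :
    ∀ t ∈ Ico z L, V t * deriv Φ t / Φ t < 0 := by
  have hsq : Real.sqrt lam > 0 := Real.sqrt_pos.mpr hlam
  -- z is interior
  have hz0 : 0 < z := by
    rcases lt_or_eq_of_le hz.1 with h | h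
    · exact h
    · exfalso; rw [← h] at hVz; rw [hVz] at hμhi; exact lt_irrefl _ hμhi
  have hzL : z < L := by
    rcases lt_or_eq_of_le hz.2 with h | h
    · exact h
    · exfalso; rw [h] at hVz; rw [hVz] at hμlo; exact lt_irrefl _ hμlo
  -- V strictly decreasing
  have hVanti : StrictAntiOn V (Icc 0 L) := by
    apply strictAntiOn_of_deriv_neg (convex_Icc 0 L) hV.continuous.continuousOn
    intro t ht; rw [interior_Icc] at ht; exact hV' t ht
  set W : ℝ → ℝ := fun s => V s * deriv Φ s with hW
  have hWcont : Continuous W := hV.continuous.mul (hΦ.continuous_deriv (by simp))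
  -- W strictly increasing on [z, L]
  have hWmono : StrictMonoOn W (Icc z L) := by
    apply strictMonoOn_of_deriv_pos (convex_Icc z L) hWcont.continuousOn
    intro t ht
    rw [interior_Icc] at ht
    have ht' : t ∈ Icc 0 L := ⟨le_of_lt (lt_of_le_of_lt hz.1 ht.1), ht.2.le⟩
    have hVt : 0 < V t := hVpos t ht'
    have hΦt : 0 < Φ t := hΦpos t ⟨lt_trans hz0 ht.1, ht.2⟩
    have hVlt : V t < k / Real.sqrt lam := by
      rw [← hVz]; exact hVanti hz ht' (ht.1)
    have hklt : V t * Real.sqrt lam < k := by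
      rwa [lt_div_iff₀ hsq] at hVlt
    have hsq2 : lam * (V t) ^ 2 < k ^ 2 := by
      have h1 : (V t * Real.sqrt lam) ^ 2 < k ^ 2 := by
        apply pow_lt_pow_left₀ hklt (by positivity) (by norm_num)
      calc lam * (V t) ^ 2 = (V t * Real.sqrt lam) ^ 2 := by
            rw [mul_pow, Real.sq_sqrt hlam.le]; ring
        _ < k ^ 2 := h1
    rw [hODE t ht']
    have : k ^ 2 * Φ t / V t - lam * V t * Φ t
        = Φ t / V t * (k ^ 2 - lam * (V t) ^ 2) := by
      field_simp
    rw [this]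
    exact mul_pos (div_pos hΦt hVt) (by linarith)
  -- deriv Φ L ≤ 0
  have hderivL : deriv Φ L ≤ 0 := by
    have hd : HasDerivAt Φ (deriv Φ L) L :=
      (hΦ.differentiable (by simp) L).hasDerivAt
    have htend := (hasDerivAt_iff_tendsto_slope.mp hd).mono_left
      (nhdsWithin_mono L (fun x (hx : x ∈ Iio L) => ne_of_lt hx))
    refine le_of_tendsto htend ?_
    filter_upwards [Ioo_mem_nhdsLT_of_mem (⟨hL, le_refl L⟩ : L ∈ Ioc 0 L)] with t ht
    have : slope Φ L t = Φ t / (t - L) := by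
      simp [slope, hΦL, div_eq_inv_mul]
    rw [this]
    exact div_nonpos_of_nonneg_of_nonpos (hΦpos t ht).le (by linarith [ht.2])
  have hWL : W L ≤ 0 :=
    mul_nonpos_of_nonneg_of_nonpos (hVpos L ⟨hL.le, le_refl L⟩).le hderivL
  intro t ht
  have hWt : W t < 0 :=
    lt_of_lt_of_le (hWmono ⟨ht.1, ht.2.le⟩ ⟨hzL.le, le_refl L⟩ ht.2) hWL
  exact div_neg_of_neg_of_pos hWt
    (hΦpos t ⟨lt_of_lt_of_le hz0 ht.1, ht.2⟩)
end

section
/- Let F, G : [0,L] → ℝ be piecewise smooth with (F')² + (G')² = 1, and V : ℝ → (0,∞) smooth. For p ∈ (0,1] set σ_p = ((F')² + p²(G')²)^{1/2}, and set σ₀ = |F'|. If w is Lipschitz on [0,L], vanishing at the endpoints, then the Rayleigh quotient R_p(w) = (∫₀ᴸ |w'|²(V∘F)/σ_p + k² w² σ_p/(V∘F) dt)/(∫₀ᴸ w² (V∘F) σ_p dt) satisfies: if R_1(w) ≥ λ_{k,n}(V∘F, σ₁) and R_1(w) ≥ k²/min(V∘F)², then R_1(w) ≤ R_p(w) for all p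 ∈ (0,1). -/
open Set MeasureTheory

/-- Rayleigh quotient for the weighted Sturm–Liouville problem with weight `v`
and speed `σ`. -/
noncomputable def Ray (a b k : ℝ) (v σ w : ℝ → ℝ) : ℝ :=
  (∫ t in a..b, (deriv w t) ^ 2 * v t / σ t + k ^ 2 * (w t) ^ 2 * σ t / v t) /
    (∫ t in a..b, (w t) ^ 2 * v t * σ t)

/-- Lipschitz functions on `[a,b]` vanishing at the endpoints. -/
def Lip0 (a b : ℝ) : Set (ℝ → ℝ) :=
  {w | (∃ K : NNReal, LipschitzWith K w) ∧ w a = 0 ∧ w b = 0}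

/-- The `n`-th min-max eigenvalue `λ_{k,n}(v,σ)`. -/
noncomputable def eig (a b k : ℝ) (n : ℕ) (v σ : ℝ → ℝ) : ℝ :=
  sInf {E | ∃ W : Submodule ℝ (ℝ → ℝ),
    Module.finrank ℝ W = n ∧ (W : Set (ℝ → ℝ)) ⊆ Lip0 a b ∧
    E = sSup {R | ∃ w ∈ W, w ≠ 0 ∧ R = Ray a b k v σ w}}

private lemma myIntegrable {f : ℝ → ℝ} {a b C : ℝ} (hab : a ≤ b)
    (hm : Measurable f) (hC : ∀ t ∈ Set.Icc a b, |f t| ≤ C) :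
    IntervalIntegrable f MeasureTheory.volume a b := by
  rw [intervalIntegrable_iff]
  have hconst : MeasureTheory.IntegrableOn (fun _ : ℝ => C) (Set.uIoc a b) volume :=
    intervalIntegrable_iff.mp intervalIntegrable_const
  refine hconst.mono' hm.aestronglyMeasurable ?_
  rw [Set.uIoc_of_le hab]
  filter_upwards [MeasureTheory.ae_restrict_mem measurableSet_Ioc] with t ht
  simpa [Real.norm_eq_abs] using hC t (Set.Ioc_subset_Icc_self ht)

set_option maxHeartbeats 1000000 in
/-- Flattening decreases speed without decreasing a large Rayleigh quotient:
if `R₁(w)` is at least the eigenvalue and at least `k²/min(V∘F)²`, then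
`R₁(w) ≤ R_p(w)` for every `p ∈ (0,1)`, where `σ_p = ((F')² + p²(G')²)^{1/2}`. -/
theorem stmt6 (L k : ℝ) (hL : 0 < L) (hk : 0 ≤ k) (F G V : ℝ → ℝ)
    (hF : ContDiff ℝ (⊤ : ℕ∞) F) (hG : ContDiff ℝ (⊤ : ℕ∞) G)
    (hV : ContDiff ℝ (⊤ : ℕ∞) V) (hVpos : ∀ x : ℝ, 0 < V x)
    (hunit : ∀ t ∈ Icc 0 L, (deriv F t) ^ 2 + (deriv G t) ^ 2 = 1)
    (σ : ℝ → ℝ → ℝ)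
    (hσ : ∀ p : ℝ, σ p = fun t => Real.sqrt ((deriv F t) ^ 2 + p ^ 2 * (deriv G t) ^ 2))
    (w : ℝ → ℝ) (hw : w ∈ Lip0 0 L) (n : ℕ) (hn : 1 ≤ n)
    (h1 : Ray 0 L k (fun t => V (F t)) (σ 1) w ≥ eig 0 L k n (fun t => V (F t)) (σ 1))
    (h2 : Ray 0 L k (fun t => V (F t)) (σ 1) w
        ≥ k ^ 2 / (sInf ((fun t => V (F t)) '' Icc 0 L)) ^ 2) :
    ∀ p ∈ Ioo (0 : ℝ) 1,
      Ray 0 L k (fun t => V (F t)) (σ 1) w ≤ Ray 0 L k (fun t => V (F t)) (σ p) w := by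
  obtain ⟨⟨K, hK⟩, hw0, hwL⟩ := hw
  intro p hp
  obtain ⟨hp0, hp1⟩ := hp
  set v : ℝ → ℝ := fun t => V (F t) with hvdef
  have hvcont : Continuous v := hV.continuous.comp hF.continuous
  have hvpos : ∀ t, 0 < v t := fun t => hVpos _
  have hσcont : ∀ q : ℝ, Continuous (σ q) := by
    intro q
    rw [hσ]
    exact (((hF.continuous_deriv (by simp)).pow 2).add
      (continuous_const.mul ((hG.continuous_deriv (by simp)).pow 2))).sqrt
  have hσval : ∀ (q : ℝ) (t : ℝ),
      σ q t = Real.sqrt ((deriv F t) ^ 2 + q ^ 2 * (deriv G t) ^ 2) := by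
    intro q t; rw [hσ]
  have hσnn : ∀ (q : ℝ) (t : ℝ), 0 ≤ σ q t := by
    intro q t; rw [hσval]; exact Real.sqrt_nonneg _
  have hσ1 : ∀ t ∈ Icc (0:ℝ) L, σ 1 t = 1 := by
    intro t ht
    rw [hσval]
    simp only [one_pow, one_mul]
    rw [hunit t ht, Real.sqrt_one]
  have hσp_ge : ∀ t ∈ Icc (0:ℝ) L, p ≤ σ p t := by
    intro t ht
    rw [hσval]
    have hin : p ^ 2 ≤ (deriv F t) ^ 2 + p ^ 2 * (deriv G t) ^ 2 := by
      nlinarith [hunit t ht, sq_nonneg (deriv F t), sq_nonneg (deriv G t),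
        mul_nonneg (le_of_lt (show (0:ℝ) < 1 - p ^ 2 by nlinarith)) (sq_nonneg (deriv F t))]
    calc p = Real.sqrt (p ^ 2) := (Real.sqrt_sq hp0.le).symm
      _ ≤ _ := Real.sqrt_le_sqrt hin
  have hσp_le : ∀ t ∈ Icc (0:ℝ) L, σ p t ≤ 1 := by
    intro t ht
    rw [hσval]
    apply Real.sqrt_le_one.mpr
    nlinarith [hunit t ht, sq_nonneg (deriv G t),
      mul_nonneg (le_of_lt (show (0:ℝ) < 1 - p ^ 2 by nlinarith)) (sq_nonneg (deriv G t))]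
  -- bound on deriv w
  have hd : ∀ t, |deriv w t| ≤ (K : ℝ) := by
    intro t
    have hf : ‖fderiv ℝ w t‖ ≤ (K : ℝ) := norm_fderiv_le_of_lipschitz ℝ hK
    have h2' := (fderiv ℝ w t).le_opNorm 1
    rw [norm_one, mul_one] at h2'
    calc |deriv w t| = ‖(fderiv ℝ w t) 1‖ := by rw [fderiv_apply_one_eq_deriv, Real.norm_eq_abs]
      _ ≤ (K : ℝ) := le_trans h2' hf
  have h0mem : (0:ℝ) ∈ Icc (0:ℝ) L := ⟨le_refl _, hL.le⟩
  obtain ⟨Cw, hCw⟩ := (isCompact_Icc :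
    IsCompact (Icc (0:ℝ) L)).exists_bound_of_continuousOn hK.continuous.continuousOn
  obtain ⟨Cv, hCv⟩ := (isCompact_Icc :
    IsCompact (Icc (0:ℝ) L)).exists_bound_of_continuousOn hvcont.continuousOn
  have hCw' : ∀ t ∈ Icc (0:ℝ) L, |w t| ≤ Cw := by
    intro t ht; simpa [Real.norm_eq_abs] using hCw t ht
  have hCv' : ∀ t ∈ Icc (0:ℝ) L, v t ≤ Cv := by
    intro t ht
    have := hCv t ht
    rw [Real.norm_eq_abs] at this
    exact le_trans (le_abs_self _) this
  have hCw0 : 0 ≤ Cw := le_trans (abs_nonneg _) (hCw' 0 h0mem)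
  have hCv0 : 0 ≤ Cv := le_trans (hvpos 0).le (hCv' 0 h0mem)
  -- the minimum of v
  set m := sInf (v '' Icc (0:ℝ) L) with hmdef
  have hSne : (v '' Icc (0:ℝ) L).Nonempty := ⟨v 0, mem_image_of_mem _ h0mem⟩
  have hScomp : IsCompact (v '' Icc (0:ℝ) L) := isCompact_Icc.image hvcont
  have hmmem : m ∈ v '' Icc (0:ℝ) L := hScomp.sInf_mem hSne
  have hmpos : 0 < m := by
    obtain ⟨t, _, ht⟩ := hmmem; rw [← ht]; exact hvpos t
  have hmle : ∀ t ∈ Icc (0:ℝ) L, m ≤ v t := fun t ht =>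
    csInf_le hScomp.bddBelow (mem_image_of_mem _ ht)
  -- integrability
  have hmw : Measurable w := hK.continuous.measurable
  have hmain : ∀ s : ℝ → ℝ, Continuous s → (∀ t ∈ Icc (0:ℝ) L, p ≤ s t) →
      (∀ t ∈ Icc (0:ℝ) L, s t ≤ 1) →
      IntervalIntegrable
        (fun t => (deriv w t) ^ 2 * v t / s t + k ^ 2 * (w t) ^ 2 * s t / v t)
        volume 0 L := by
    intro s hsc hsge hsle
    apply myIntegrable (C := (K : ℝ) ^ 2 * Cv / p + k ^ 2 * Cw ^ 2 / m) hL.le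
    · exact ((((measurable_deriv w).pow_const 2).mul hvcont.measurable).div
        hsc.measurable).add
        ((((hmw.pow_const 2).const_mul (k ^ 2)).mul hsc.measurable).div
          hvcont.measurable)
    · intro t ht
      have hs0 : 0 < s t := lt_of_lt_of_le hp0 (hsge t ht)
      have hvt := hvpos t
      have hd2 : (deriv w t) ^ 2 ≤ (K : ℝ) ^ 2 :=
        sq_le_sq' (by linarith [(abs_le.mp (hd t)).1]) (abs_le.mp (hd t)).2
      have hw2 : (w t) ^ 2 ≤ Cw ^ 2 :=
        sq_le_sq' (by linarith [(abs_le.mp (hCw' t ht)).1]) (abs_le.mp (hCw' t ht)).2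
      have hb1 : (deriv w t) ^ 2 * v t / s t ≤ (K : ℝ) ^ 2 * Cv / p := by
        apply div_le_div₀ (by positivity)
          (mul_le_mul hd2 (hCv' t ht) hvt.le (by positivity)) hp0 (hsge t ht)
      have hb2 : k ^ 2 * (w t) ^ 2 * s t / v t ≤ k ^ 2 * Cw ^ 2 / m := by
        apply div_le_div₀ (by positivity) ?_ hmpos (hmle t ht)
        nlinarith [mul_nonneg (sq_nonneg k) (sq_nonneg (w t)), hsle t ht, hs0.le,
          sq_nonneg k]
      have hn1 : 0 ≤ (deriv w t) ^ 2 * v t / s t :=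
        div_nonneg (mul_nonneg (sq_nonneg _) hvt.le) hs0.le
      have hn2 : 0 ≤ k ^ 2 * (w t) ^ 2 * s t / v t :=
        div_nonneg (mul_nonneg (mul_nonneg (sq_nonneg _) (sq_nonneg _)) hs0.le) hvt.le
      rw [abs_of_nonneg (by linarith)]
      linarith
  have hsg1 : ∀ t ∈ Icc (0:ℝ) L, p ≤ σ 1 t := by
    intro t ht; rw [hσ1 t ht]; exact hp1.le
  have hsl1 : ∀ t ∈ Icc (0:ℝ) L, σ 1 t ≤ 1 := fun t ht => le_of_eq (hσ1 t ht)
  have hA1 := hmain (σ 1) (hσcont 1) hsg1 hsl1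
  have hAp := hmain (σ p) (hσcont p) hσp_ge hσp_le
  have hB : ∀ q : ℝ, IntervalIntegrable (fun t => (w t) ^ 2 * v t * σ q t) volume 0 L :=
    fun q => (((hK.continuous.pow 2).mul hvcont).mul (hσcont q)).intervalIntegrable 0 L
  have hB1 := hB 1
  have hBp := hB p
  -- nonnegativity of numerators and denominators
  have hNnn : ∀ q : ℝ,
      0 ≤ ∫ t in (0:ℝ)..L, (deriv w t) ^ 2 * v t / σ q t
        + k ^ 2 * (w t) ^ 2 * σ q t / v t := by
    intro q
    apply intervalIntegral.integral_nonneg hL.le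
    intro u _
    exact add_nonneg
      (div_nonneg (mul_nonneg (sq_nonneg _) (hvpos u).le) (hσnn q u))
      (div_nonneg (mul_nonneg (mul_nonneg (sq_nonneg _) (sq_nonneg _)) (hσnn q u))
        (hvpos u).le)
  have hDnn : ∀ q : ℝ, 0 ≤ ∫ t in (0:ℝ)..L, (w t) ^ 2 * v t * σ q t := by
    intro q
    apply intervalIntegral.integral_nonneg hL.le
    intro u _
    exact mul_nonneg (mul_nonneg (sq_nonneg _) (hvpos u).le) (hσnn q u)
  have hRay : ∀ q : ℝ → ℝ, Ray 0 L k v q w =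
      (∫ t in (0:ℝ)..L, (deriv w t) ^ 2 * v t / q t + k ^ 2 * (w t) ^ 2 * q t / v t) /
        (∫ t in (0:ℝ)..L, (w t) ^ 2 * v t * q t) := fun q => rfl
  by_cases hD1 : 0 < ∫ t in (0:ℝ)..L, (w t) ^ 2 * v t * σ 1 t
  · -- main case
    rw [ge_iff_le, div_le_iff₀ (by positivity)] at h2
    generalize hRdef : Ray 0 L k v (σ 1) w = R at h2 ⊢
    have hReq : (∫ t in (0:ℝ)..L, (deriv w t) ^ 2 * v t / σ 1 t
        + k ^ 2 * (w t) ^ 2 * σ 1 t / v t) /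
        (∫ t in (0:ℝ)..L, (w t) ^ 2 * v t * σ 1 t) = R := by
      rw [← hRay (σ 1), hRdef]
    have hRnn : 0 ≤ R := by
      rw [← hReq]
      exact div_nonneg (hNnn 1) (hDnn 1)
    have hRv : ∀ t ∈ Icc (0:ℝ) L, k ^ 2 ≤ R * (v t) ^ 2 := by
      intro t ht
      have hm2 : m ^ 2 ≤ (v t) ^ 2 := by nlinarith [hmle t ht, hmpos]
      nlinarith [mul_nonneg hRnn (sub_nonneg.mpr hm2)]
    have hpt : ∀ t ∈ Icc (0:ℝ) L,
        ((deriv w t) ^ 2 * v t / σ 1 t + k ^ 2 * (w t) ^ 2 * σ 1 t / v t)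
            - R * ((w t) ^ 2 * v t * σ 1 t)
          ≤ ((deriv w t) ^ 2 * v t / σ p t + k ^ 2 * (w t) ^ 2 * σ p t / v t)
            - R * ((w t) ^ 2 * v t * σ p t) := by
      intro t ht
      rw [hσ1 t ht]
      have hs0 : 0 < σ p t := lt_of_lt_of_le hp0 (hσp_ge t ht)
      have hs1 : σ p t ≤ 1 := hσp_le t ht
      have hvt := hvpos t
      have hX : k ^ 2 / v t ≤ R * v t := (div_le_iff₀ hvt).mpr (by nlinarith [hRv t ht])
      have hA : (deriv w t) ^ 2 * v t ≤ (deriv w t) ^ 2 * v t / σ p t := by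
        rw [le_div_iff₀ hs0]
        nlinarith [mul_nonneg (sq_nonneg (deriv w t)) hvt.le]
      have hB' : 0 ≤ (R * v t - k ^ 2 / v t) * (w t) ^ 2 * (1 - σ p t) :=
        mul_nonneg (mul_nonneg (by linarith) (sq_nonneg _)) (by linarith)
      have e1 : k ^ 2 * (w t) ^ 2 * σ p t / v t = (k ^ 2 / v t) * ((w t) ^ 2 * σ p t) := by
        ring
      have e2 : k ^ 2 * (w t) ^ 2 * 1 / v t = (k ^ 2 / v t) * (w t) ^ 2 := by ring
      rw [e1, e2]
      nlinarith [hA, hB']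
    have hmono :
        (∫ t in (0:ℝ)..L, (((deriv w t) ^ 2 * v t / σ 1 t
            + k ^ 2 * (w t) ^ 2 * σ 1 t / v t) - R * ((w t) ^ 2 * v t * σ 1 t)))
          ≤ ∫ t in (0:ℝ)..L, (((deriv w t) ^ 2 * v t / σ p t
            + k ^ 2 * (w t) ^ 2 * σ p t / v t) - R * ((w t) ^ 2 * v t * σ p t)) :=
      intervalIntegral.integral_mono_on hL.le (hA1.sub (hB1.const_mul R))
        (hAp.sub (hBp.const_mul R)) hpt
    rw [intervalIntegral.integral_sub hA1 (hB1.const_mul R),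
      intervalIntegral.integral_sub hAp (hBp.const_mul R),
      intervalIntegral.integral_const_mul, intervalIntegral.integral_const_mul] at hmono
    have hz : (∫ t in (0:ℝ)..L, (deriv w t) ^ 2 * v t / σ 1 t
        + k ^ 2 * (w t) ^ 2 * σ 1 t / v t)
        - R * (∫ t in (0:ℝ)..L, (w t) ^ 2 * v t * σ 1 t) = 0 := by
      rw [← hReq, div_mul_cancel₀ _ (ne_of_gt hD1), sub_self]
    have hDp_pos : 0 < ∫ t in (0:ℝ)..L, (w t) ^ 2 * v t * σ p t := by
      have hstep : p * (∫ t in (0:ℝ)..L, (w t) ^ 2 * v t * σ 1 t)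
          ≤ ∫ t in (0:ℝ)..L, (w t) ^ 2 * v t * σ p t := by
        rw [← intervalIntegral.integral_const_mul]
        apply intervalIntegral.integral_mono_on hL.le (hB1.const_mul p) hBp
        intro t ht
        rw [hσ1 t ht]
        nlinarith [hσp_ge t ht, mul_nonneg (sq_nonneg (w t)) (hvpos t).le]
      nlinarith [hD1]
    rw [hRay (σ p), le_div_iff₀ hDp_pos]
    linarith [hmono, hz]
  · -- degenerate case: denominator vanishes
    have hD1' : (∫ t in (0:ℝ)..L, (w t) ^ 2 * v t * σ 1 t) = 0 :=
      le_antisymm (not_lt.mp hD1) (hDnn 1)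
    rw [hRay (σ 1), hRay (σ p), hD1', div_zero]
    exact div_nonneg (hNnn p) (hDnn p)
end

section
/- Define sequences (μ_m) and (y_m) by: μ₀ = k/√λ, y_m = Y(V_ω⁻¹(μ_m)) where Y = V_ω Φ'/Φ is as above (with the convention y_m = −∞ if μ_m = V_ω(L)), and μ_{m+1} = max{V_ω(L), √((k² − y_m²)/λ)} if y_m² ≤ k², else μ_{m+1} = V_ω(L). Then (μ_m) is strictly decreasing until it reaches V_ω(L), and there exists a finite M with μ_M = V_ω(L). -/
open Set MeasureTheory

noncomputable def Wfn (k lam : ℝ) (V Φ : ℝ → ℝ) : ℝ → ℝ :=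
  fun s => (V s * deriv Φ s) ^ 2 - (k ^ 2 - lam * (V s) ^ 2) * (Φ s) ^ 2

theorem W_hasDeriv (L k lam : ℝ) (V Φ : ℝ → ℝ)
    (hV : ContDiff ℝ (⊤ : ℕ∞) V) (hΦ : ContDiff ℝ (⊤ : ℕ∞) Φ)
    (hVpos : ∀ t ∈ Icc 0 L, 0 < V t)
    (hODE : ∀ t ∈ Icc 0 L,
      deriv (fun s => V s * deriv Φ s) t = k ^ 2 * Φ t / V t - lam * V t * Φ t)
    {t : ℝ} (ht : t ∈ Icc 0 L) :
    HasDerivAt (Wfn k lam V Φ) (2 * lam * V t * deriv V t * (Φ t) ^ 2) t := by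
  have hΦd : Differentiable ℝ (deriv Φ) :=
    ((contDiff_infty_iff_deriv.mp (hΦ.of_le (by simp))).2).differentiable (by simp)
  have hVd : Differentiable ℝ V := hV.differentiable (by simp)
  have hΦdiff : Differentiable ℝ Φ := hΦ.differentiable (by simp)
  have hu : Differentiable ℝ (fun s => V s * deriv Φ s) := hVd.mul hΦd
  have h1 : HasDerivAt (fun s => V s * deriv Φ s)
      (k ^ 2 * Φ t / V t - lam * V t * Φ t) t := by
    have := (hu t).hasDerivAt
    rwa [hODE t ht] at this
  have hV' : HasDerivAt V (deriv V t) t := (hVd t).hasDerivAt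
  have hΦ' : HasDerivAt Φ (deriv Φ t) t := (hΦdiff t).hasDerivAt
  have hA : HasDerivAt (fun s => k ^ 2 - lam * (V s) ^ 2)
      (-(lam * (2 * V t ^ 1 * deriv V t))) t := ((hV'.pow 2).const_mul lam).const_sub (k ^ 2)
  have hB : HasDerivAt (fun s => (Φ s) ^ 2) (2 * Φ t ^ 1 * deriv Φ t) t := hΦ'.pow 2
  have hu2 : HasDerivAt (fun s => (V s * deriv Φ s) ^ 2)
      (2 * (V t * deriv Φ t) ^ 1 * (k ^ 2 * Φ t / V t - lam * V t * Φ t)) t := h1.pow 2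
  have H := hu2.sub (hA.mul hB)
  convert H using 1
  · rfl
  · rfl
  · rfl
  have hVt : V t ≠ 0 := ne_of_gt (hVpos t ht)
  linear_combination (-2 * deriv Φ t * k ^ 2 * Φ t) * mul_inv_cancel₀ hVt

theorem derivV_nonpos (L : ℝ) (V : ℝ → ℝ) (hV : ContDiff ℝ (⊤ : ℕ∞) V)
    (hVanti : StrictAntiOn V (Icc 0 L)) {x : ℝ} (hx : x ∈ Ioo 0 L) :
    deriv V x ≤ 0 := by
  have hVd : Differentiable ℝ V := hV.differentiable (by simp)
  have hd : HasDerivAt V (deriv V x) x := (hVd x).hasDerivAt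
  have hT : Filter.Tendsto (slope V x) (nhdsWithin x (Set.Ioi x)) (nhds (deriv V x)) :=
    (hasDerivAt_iff_tendsto_slope.mp hd).mono_left
      (nhdsWithin_mono x fun y hy => ne_of_gt hy)
  refine le_of_tendsto hT ?_
  filter_upwards [Ioo_mem_nhdsGT_of_mem ⟨le_refl x, hx.2⟩] with y hy
  have hxy : x < y := hy.1
  have hVy : V y < V x :=
    hVanti ⟨le_of_lt hx.1, le_of_lt hx.2⟩ ⟨le_of_lt (hx.1.trans hxy), le_of_lt hy.2⟩ hxy
  have : slope V x y = (V y - V x) / (y - x) := by rw [slope_def_field]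
  rw [this]
  exact div_nonpos_of_nonpos_of_nonneg (by linarith) (by linarith)

theorem W_anti (L k lam : ℝ) (V Φ : ℝ → ℝ) (hlam : 0 < lam)
    (hV : ContDiff ℝ (⊤ : ℕ∞) V) (hΦ : ContDiff ℝ (⊤ : ℕ∞) Φ)
    (hVpos : ∀ t ∈ Icc 0 L, 0 < V t) (hVanti : StrictAntiOn V (Icc 0 L))
    (hODE : ∀ t ∈ Icc 0 L,
      deriv (fun s => V s * deriv Φ s) t = k ^ 2 * Φ t / V t - lam * V t * Φ t) :
    AntitoneOn (Wfn k lam V Φ) (Icc 0 L) := by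
  apply antitoneOn_of_deriv_nonpos (convex_Icc 0 L)
  · apply Continuous.continuousOn
    have hΦd : Differentiable ℝ (deriv Φ) :=
      ((contDiff_infty_iff_deriv.mp (hΦ.of_le (by simp))).2).differentiable (by simp)
    have hVd : Differentiable ℝ V := hV.differentiable (by simp)
    have hΦdiff : Differentiable ℝ Φ := hΦ.differentiable (by simp)
    unfold Wfn
    fun_prop
  · intro x hx
    rw [interior_Icc] at hx
    exact ((W_hasDeriv L k lam V Φ hV hΦ hVpos hODE (Ioo_subset_Icc_self hx)).differentiableAt).differentiableWithinAt
  · intro x hx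
    rw [interior_Icc] at hx
    rw [(W_hasDeriv L k lam V Φ hV hΦ hVpos hODE (Ioo_subset_Icc_self hx)).deriv]
    have h1 : deriv V x ≤ 0 := derivV_nonpos L V hV hVanti hx
    have h2 : 0 < V x := hVpos x (Ioo_subset_Icc_self hx)
    have h3 : (0:ℝ) ≤ (Φ x) ^ 2 := sq_nonneg _
    nlinarith [mul_nonneg (mul_nonneg (by linarith : (0:ℝ) ≤ 2 * lam) h2.le) h3, mul_nonpos_of_nonpos_of_nonneg h1 h3]

theorem W_strict (L k lam : ℝ) (V Φ : ℝ → ℝ) (hlam : 0 < lam)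
    (hV : ContDiff ℝ (⊤ : ℕ∞) V) (hΦ : ContDiff ℝ (⊤ : ℕ∞) Φ)
    (hVpos : ∀ t ∈ Icc 0 L, 0 < V t) (hVanti : StrictAntiOn V (Icc 0 L))
    (hΦpos : ∀ t ∈ Ioo 0 L, 0 < Φ t)
    (hODE : ∀ t ∈ Icc 0 L,
      deriv (fun s => V s * deriv Φ s) t = k ^ 2 * Φ t / V t - lam * V t * Φ t) :
    ∀ t ∈ Ico 0 L, Wfn k lam V Φ L < Wfn k lam V Φ t := by
  intro t ht
  by_contra hcon
  push_neg at hcon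
  have hanti := W_anti L k lam V Φ hlam hV hΦ hVpos hVanti hODE
  have htI : t ∈ Icc 0 L := ⟨ht.1, ht.2.le⟩
  have hLI : L ∈ Icc 0 L := ⟨ht.1.trans ht.2.le, le_refl L⟩
  have hconst : ∀ s ∈ Icc t L, Wfn k lam V Φ s = Wfn k lam V Φ L := by
    intro s hs
    have hsI : s ∈ Icc 0 L := ⟨ht.1.trans hs.1, hs.2⟩
    have h1 : Wfn k lam V Φ L ≤ Wfn k lam V Φ s := hanti hsI hLI hs.2
    have h2 : Wfn k lam V Φ s ≤ Wfn k lam V Φ t := hanti htI hsI hs.1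
    linarith
  have hderiv0 : ∀ s ∈ Ioo t L, deriv V s = 0 := by
    intro s hs
    have hsI : s ∈ Ioo 0 L := ⟨lt_of_le_of_lt ht.1 hs.1, hs.2⟩
    have heq : Wfn k lam V Φ =ᶠ[nhds s] fun _ => Wfn k lam V Φ L := by
      filter_upwards [Ioo_mem_nhds hs.1 hs.2] with x hx
      exact hconst x ⟨hx.1.le, hx.2.le⟩
    have hd0 : deriv (Wfn k lam V Φ) s = 0 := by
      rw [heq.deriv_eq]; exact deriv_const s _
    have hd := (W_hasDeriv L k lam V Φ hV hΦ hVpos hODE (Ioo_subset_Icc_self hsI)).deriv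
    rw [hd0] at hd
    have hVs : V s ≠ 0 := ne_of_gt (hVpos s (Ioo_subset_Icc_self hsI))
    have hΦs : Φ s ≠ 0 := ne_of_gt (hΦpos s hsI)
    have e := hd.symm
    rcases mul_eq_zero.mp e with h | h
    · rcases mul_eq_zero.mp h with h' | h'
      · exfalso
        rcases mul_eq_zero.mp h' with h'' | h''
        · rcases mul_eq_zero.mp h'' with h3 | h3
          · norm_num at h3
          · exact absurd h3 (ne_of_gt hlam)
        · exact hVs h''
      · exact h'
    · exact absurd h (pow_ne_zero 2 hΦs)
  have htL : t < L := ht.2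
  set s1 := t + (L - t) / 3 with hs1
  set s2 := t + 2 * (L - t) / 3 with hs2
  have h12 : s1 < s2 := by rw [hs1, hs2]; linarith
  have hVd : Differentiable ℝ V := hV.differentiable (by simp)
  obtain ⟨c, hc, hcd⟩ := exists_deriv_eq_slope V h12
    (hVd.continuous.continuousOn) (hVd.differentiableOn)
  have hcIoo : c ∈ Ioo t L := ⟨by rw [hs1] at hc; linarith [hc.1], by rw [hs2] at hc; linarith [hc.2]⟩
  rw [hderiv0 c hcIoo] at hcd
  have hne : s2 - s1 ≠ 0 := by rw [hs1, hs2]; intro h; apply absurd h; intro h'; linarith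
  have hVeq : V s2 = V s1 := by
    field_simp at hcd
    linarith
  have hs1I : s1 ∈ Icc 0 L := ⟨by rw [hs1]; linarith [ht.1], by rw [hs1]; linarith⟩
  have hs2I : s2 ∈ Icc 0 L := ⟨by rw [hs2]; linarith [ht.1], by rw [hs2]; linarith⟩
  exact absurd hVeq (ne_of_lt (hVanti hs1I hs2I h12))

theorem derivPhiL_ne (L k lam : ℝ) (V Φ : ℝ → ℝ) (hL : 0 < L) (hlam : 0 < lam)
    (hV : ContDiff ℝ (⊤ : ℕ∞) V) (hΦ : ContDiff ℝ (⊤ : ℕ∞) Φ)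
    (hVpos : ∀ t ∈ Icc 0 L, 0 < V t) (hVanti : StrictAntiOn V (Icc 0 L))
    (hΦpos : ∀ t ∈ Ioo 0 L, 0 < Φ t) (hΦL : Φ L = 0)
    (hODE : ∀ t ∈ Icc 0 L,
      deriv (fun s => V s * deriv Φ s) t = k ^ 2 * Φ t / V t - lam * V t * Φ t) :
    deriv Φ L ≠ 0 := by
  intro hdL
  have hΦd : Differentiable ℝ (deriv Φ) :=
    ((contDiff_infty_iff_deriv.mp (hΦ.of_le (by simp))).2).differentiable (by simp)
  have hVd : Differentiable ℝ V := hV.differentiable (by simp)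
  have hΦdiff : Differentiable ℝ Φ := hΦ.differentiable (by simp)
  set u : ℝ → ℝ := fun s => V s * deriv Φ s with hu_def
  have hud : Differentiable ℝ u := hVd.mul hΦd
  have huL : u L = 0 := by simp [hu_def, hdL]
  have hLmem : L ∈ Icc 0 L := ⟨hL.le, le_refl L⟩
  have h0mem : (0:ℝ) ∈ Icc 0 L := ⟨le_refl 0, hL.le⟩
  have hVL : 0 < V L := hVpos L hLmem
  have hV0 : 0 < V 0 := hVpos 0 h0mem
  have hVmono : AntitoneOn V (Icc 0 L) := hVanti.antitoneOn
  set C1 : ℝ := 1 / V L with hC1_def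
  set C2 : ℝ := k ^ 2 / V L + lam * V 0 with hC2_def
  set C : ℝ := C1 + C2 with hC_def
  have hC1 : 0 < C1 := by positivity
  have hC2 : 0 ≤ C2 := by positivity
  have hC : 0 < C := by positivity
  set δ : ℝ := min (1 / (2 * C)) (L / 2) with hδ_def
  have hδ : 0 < δ := lt_min (by positivity) (by positivity)
  have hδC : δ * C ≤ 1 / 2 := by
    have h1 : δ ≤ 1 / (2 * C) := min_le_left _ _
    calc δ * C ≤ (1 / (2 * C)) * C := by nlinarith
    _ = 1 / 2 := by field_simp
  have hδL : δ ≤ L / 2 := min_le_right _ _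
  have hIsub : Icc (L - δ) L ⊆ Icc 0 L := by
    intro x hx
    constructor
    · linarith [hx.1]
    · exact hx.2
  set g : ℝ → ℝ := fun s => |Φ s| + |u s| with hg_def
  have hgcont : Continuous g := by
    apply Continuous.add
    · exact hΦdiff.continuous.abs
    · exact hud.continuous.abs
  have hInonempty : (Icc (L - δ) L).Nonempty := ⟨L, by constructor <;> linarith⟩
  have hLmem' : L ∈ Icc (L - δ) L := ⟨by linarith, le_refl L⟩
  obtain ⟨t₁, ht₁I, ht₁max⟩ := isCompact_Icc.exists_isMaxOn hInonempty hgcont.continuousOn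
  set M : ℝ := g t₁ with hM_def
  have hM0 : 0 ≤ M := add_nonneg (abs_nonneg _) (abs_nonneg _)
  have hgleM : ∀ x ∈ Icc (L - δ) L, g x ≤ M := fun x hx => ht₁max hx
  -- bound on deriv Φ over I
  have hdΦbound : ∀ x ∈ Icc (L - δ) L, ‖deriv Φ x‖ ≤ C1 * M := by
    intro x hx
    have hxI : x ∈ Icc 0 L := hIsub hx
    have hVx : 0 < V x := hVpos x hxI
    have hVLx : V L ≤ V x := hVmono hxI hLmem hx.2
    have hdx : deriv Φ x = u x / V x := by
      rw [hu_def]; field_simp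
    rw [Real.norm_eq_abs, hdx, abs_div, abs_of_pos hVx]
    have h2 : |u x| ≤ M := le_trans (le_add_of_nonneg_left (abs_nonneg _)) (hgleM x hx)
    have h3 : |u x| / V x ≤ M / V L := by gcongr
    calc |u x| / V x ≤ M / V L := h3
      _ = C1 * M := by rw [hC1_def]; ring
  -- bound on deriv u over I
  have hdubound : ∀ x ∈ Icc (L - δ) L, ‖deriv u x‖ ≤ C2 * M := by
    intro x hx
    have hxI : x ∈ Icc 0 L := hIsub hx
    have hVx : 0 < V x := hVpos x hxI
    have hVLx : V L ≤ V x := hVmono hxI hLmem hx.2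
    have hVx0 : V x ≤ V 0 := hVmono h0mem hxI hxI.1
    have hΦM : |Φ x| ≤ M := le_trans (le_add_of_nonneg_right (abs_nonneg _)) (hgleM x hx)
    rw [Real.norm_eq_abs, hODE x hxI]
    have e1 : |k ^ 2 * Φ x / V x - lam * V x * Φ x| ≤ |k ^ 2 * Φ x / V x| + |lam * V x * Φ x| :=
      abs_sub _ _
    have e2 : |k ^ 2 * Φ x / V x| = k ^ 2 * |Φ x| / V x := by
      rw [abs_div, abs_mul, abs_of_pos hVx, abs_of_nonneg (sq_nonneg k)]
    have e3 : |lam * V x * Φ x| = lam * V x * |Φ x| := by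
      rw [abs_mul, abs_mul, abs_of_pos hlam, abs_of_pos hVx]
    have e4 : k ^ 2 * |Φ x| / V x ≤ k ^ 2 * M / V L := by gcongr
    have e5 : lam * V x * |Φ x| ≤ lam * V 0 * M := by
      have := mul_le_mul (mul_le_mul_of_nonneg_left hVx0 hlam.le) hΦM (abs_nonneg _)
        (by positivity)
      linarith
    calc |k ^ 2 * Φ x / V x - lam * V x * Φ x|
        ≤ |k ^ 2 * Φ x / V x| + |lam * V x * Φ x| := e1
      _ = k ^ 2 * |Φ x| / V x + lam * V x * |Φ x| := by rw [e2, e3]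
      _ ≤ k ^ 2 * M / V L + lam * V 0 * M := add_le_add e4 e5
      _ = C2 * M := by rw [hC2_def]; field_simp
  -- main bound
  have hbound : ∀ s ∈ Icc (L - δ) L, g s ≤ δ * C * M := by
    intro s hs
    have hΦs : ‖Φ s - Φ L‖ ≤ (C1 * M) * ‖s - L‖ :=
      (convex_Icc (L - δ) L).norm_image_sub_le_of_norm_deriv_le
        (fun x _ => hΦdiff x) hdΦbound hLmem' hs
    have huI : ‖u s - u L‖ ≤ (C2 * M) * ‖s - L‖ :=
      (convex_Icc (L - δ) L).norm_image_sub_le_of_norm_deriv_le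
        (fun x _ => hud x) hdubound hLmem' hs
    have hsL : ‖s - L‖ ≤ δ := by
      rw [Real.norm_eq_abs, abs_of_nonpos (by linarith [hs.2] : s - L ≤ 0)]
      linarith [hs.1]
    have h1 : |Φ s| ≤ C1 * M * δ := by
      have h := hΦs
      rw [hΦL, sub_zero, Real.norm_eq_abs] at h
      calc |Φ s| ≤ C1 * M * ‖s - L‖ := h
        _ ≤ C1 * M * δ := mul_le_mul_of_nonneg_left hsL (by positivity)
    have h2 : |u s| ≤ C2 * M * δ := by
      have h := huI
      rw [huL, sub_zero, Real.norm_eq_abs] at h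
      calc |u s| ≤ C2 * M * ‖s - L‖ := h
        _ ≤ C2 * M * δ := mul_le_mul_of_nonneg_left hsL (by positivity)
    have : g s = |Φ s| + |u s| := rfl
    rw [this]
    calc |Φ s| + |u s| ≤ C1 * M * δ + C2 * M * δ := add_le_add h1 h2
      _ = δ * C * M := by rw [hC_def]; ring
  have hM' : M ≤ δ * C * M := hbound t₁ ht₁I
  have hkey : δ * C * M ≤ 1 / 2 * M := mul_le_mul_of_nonneg_right hδC hM0
  have hM2 : M ≤ 1 / 2 * M := le_trans hM' hkey
  have hMeq : M = 0 := le_antisymm (by clear_value M; linarith only [hM2]) hM0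
  set p : ℝ := L - δ / 2 with hp_def
  have hpI : p ∈ Icc (L - δ) L := ⟨by rw [hp_def]; linarith, by rw [hp_def]; linarith⟩
  have hpIoo : p ∈ Ioo 0 L := ⟨by rw [hp_def]; linarith, by rw [hp_def]; linarith⟩
  have hgp : g p ≤ 0 := by
    have := hgleM p hpI
    rw [hMeq] at this
    exact this
  have hΦp : 0 < Φ p := hΦpos p hpIoo
  have : |Φ p| + |u p| ≤ 0 := hgp
  have := le_abs_self (Φ p)
  have := abs_nonneg (u p)
  linarith

/-- The recursively defined sequence `μ_m` (with `μ₀ = k/√λ`,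
`y_m = Y(V_ω⁻¹(μ_m))` and `μ_{m+1} = max{V_ω(L), √((k²−y_m²)/λ)}`, set to
`V_ω(L)` once `y_m² > k²` or once the value `V_ω(L)` is reached) is strictly
decreasing until it reaches `V_ω(L)`, and reaches it in finitely many steps. -/
theorem stmt9 (L k lam : ℝ) (V Φ : ℝ → ℝ)
    (hL : 0 < L) (hk : 0 ≤ k) (hlam : 0 < lam)
    (hV : ContDiff ℝ (⊤ : ℕ∞) V) (hVpos : ∀ t ∈ Icc 0 L, 0 < V t)
    (hVanti : StrictAntiOn V (Icc 0 L))
    (hΦ : ContDiff ℝ (⊤ : ℕ∞) Φ) (hΦpos : ∀ t ∈ Ioo 0 L, 0 < Φ t)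
    (hΦ0 : Φ 0 = 0) (hΦL : Φ L = 0)
    (hODE : ∀ t ∈ Icc 0 L,
      deriv (fun s => V s * deriv Φ s) t = k ^ 2 * Φ t / V t - lam * V t * Φ t)
    (z : ℝ → ℝ) (hz : ∀ μ' ∈ Icc (V L) (V 0), z μ' ∈ Icc 0 L ∧ V (z μ') = μ')
    (hμ0lo : V L < k / Real.sqrt lam) (hμ0hi : k / Real.sqrt lam < V 0)
    (μ y : ℕ → ℝ)
    (hμzero : μ 0 = k / Real.sqrt lam)
    (hrec : ∀ m : ℕ,
      (μ m = V L ∧ μ (m + 1) = V L) ∨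
      (μ m ≠ V L ∧
        y m = V (z (μ m)) * deriv Φ (z (μ m)) / Φ (z (μ m)) ∧
        μ (m + 1) =
          if k ^ 2 < (y m) ^ 2 then V L
          else max (V L) (Real.sqrt ((k ^ 2 - (y m) ^ 2) / lam)))) :
    (∀ m : ℕ, μ (m + 1) ≤ μ m ∧ (μ m ≠ V L → μ (m + 1) < μ m)) ∧
      ∃ M : ℕ, μ M = V L := by
  have hLI : L ∈ Icc 0 L := ⟨hL.le, le_refl L⟩
  have h0I : (0:ℝ) ∈ Icc 0 L := ⟨le_refl 0, hL.le⟩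
  have hVL : 0 < V L := hVpos L hLI
  have hVV : V L < V 0 := hVanti h0I hLI hL
  have hμ00 : V L < μ 0 := by rw [hμzero]; exact hμ0lo
  have hμ0V0 : μ 0 < V 0 := by rw [hμzero]; exact hμ0hi
  have hμ0pos : 0 < μ 0 := hVL.trans hμ00
  -- z facts
  have hzmem : ∀ μ' ∈ Icc (V L) (V 0), z μ' ∈ Icc 0 L := fun μ' h => (hz μ' h).1
  have hzval : ∀ μ' ∈ Icc (V L) (V 0), V (z μ') = μ' := fun μ' h => (hz μ' h).2
  have hz_lt_L : ∀ μ' ∈ Icc (V L) (V 0), V L < μ' → z μ' < L := by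
    intro μ' hm hlt
    rcases lt_or_eq_of_le (hzmem μ' hm).2 with h | h
    · exact h
    · exfalso
      have := hzval μ' hm
      rw [h] at this
      exact absurd this (ne_of_lt hlt)
  have hz_gt_0 : ∀ μ' ∈ Icc (V L) (V 0), μ' < V 0 → 0 < z μ' := by
    intro μ' hm hlt
    rcases lt_or_eq_of_le (hzmem μ' hm).1 with h | h
    · exact h
    · exfalso
      have := hzval μ' hm
      rw [← h] at this
      exact absurd this (ne_of_gt hlt)
  have hz_anti : ∀ μ₁ ∈ Icc (V L) (V 0), ∀ μ₂ ∈ Icc (V L) (V 0), μ₁ ≤ μ₂ → z μ₂ ≤ z μ₁ := by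
    intro μ₁ h₁ μ₂ h₂ hle
    by_contra hcon
    push_neg at hcon
    have := hVanti (hzmem μ₁ h₁) (hzmem μ₂ h₂) hcon
    rw [hzval μ₁ h₁, hzval μ₂ h₂] at this
    linarith
  -- W positivity
  have hWL : Wfn k lam V Φ L = (V L * deriv Φ L) ^ 2 := by simp [Wfn, hΦL]
  have hdΦL : deriv Φ L ≠ 0 :=
    derivPhiL_ne L k lam V Φ hL hlam hV hΦ hVpos hVanti hΦpos hΦL hODE
  have hWLpos : 0 < Wfn k lam V Φ L := by
    rw [hWL]
    exact pow_two_pos_of_ne_zero (mul_ne_zero (ne_of_gt hVL) hdΦL)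
  have hWpos : ∀ t ∈ Ico 0 L, 0 < Wfn k lam V Φ t := fun t ht =>
    hWLpos.trans (W_strict L k lam V Φ hlam hV hΦ hVpos hVanti hΦpos hODE t ht)
  have hWanti : AntitoneOn (Wfn k lam V Φ) (Icc 0 L) :=
    W_anti L k lam V Φ hlam hV hΦ hVpos hVanti hODE
  -- step lemma
  have step : ∀ m : ℕ, V L ≤ μ m → μ m ≤ μ 0 →
      V L ≤ μ (m + 1) ∧ μ (m + 1) ≤ μ m ∧ (μ m ≠ V L → μ (m + 1) < μ m) := by
    intro m h1 h2
    rcases hrec m with ⟨he, he2⟩ | ⟨hne, hy, hnext⟩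
    · rw [he2, he]
      exact ⟨le_refl _, le_refl _, fun hc => absurd rfl hc⟩
    · have hαμ : V L < μ m := lt_of_le_of_ne h1 (Ne.symm hne)
      have hμβ : μ m < V 0 := lt_of_le_of_lt h2 hμ0V0
      have hmI : μ m ∈ Icc (V L) (V 0) := ⟨h1, hμβ.le⟩
      set t := z (μ m) with ht_def
      have htIoo : t ∈ Ioo 0 L := ⟨hz_gt_0 _ hmI hμβ, hz_lt_L _ hmI hαμ⟩
      have hΦt : 0 < Φ t := hΦpos t htIoo
      have hVt : V t = μ m := hzval _ hmI
      have hWt : 0 < Wfn k lam V Φ t := hWpos t ⟨htIoo.1.le, htIoo.2⟩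
      have hy2 : k ^ 2 - lam * (μ m) ^ 2 < (y m) ^ 2 := by
        have hW' : (k ^ 2 - lam * (μ m) ^ 2) * (Φ t) ^ 2 < (V t * deriv Φ t) ^ 2 := by
          simp only [Wfn] at hWt
          rw [hVt] at hWt ⊢
          linarith
        rw [hy, div_pow]
        rw [lt_div_iff₀ (pow_pos hΦt 2)]
        exact hW'
      by_cases hcase : k ^ 2 < (y m) ^ 2
      · rw [hnext, if_pos hcase]
        exact ⟨le_refl _, hαμ.le, fun _ => hαμ⟩
      · push_neg at hcase
        have hnn : 0 ≤ (k ^ 2 - (y m) ^ 2) / lam := by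
          apply div_nonneg _ hlam.le
          linarith
        have hμmpos : 0 < μ m := hVL.trans hαμ
        have hlt : (k ^ 2 - (y m) ^ 2) / lam < (μ m) ^ 2 := by
          rw [div_lt_iff₀ hlam]
          nlinarith
        have hsq : Real.sqrt ((k ^ 2 - (y m) ^ 2) / lam) < μ m :=
          (Real.sqrt_lt' hμmpos).mpr hlt
        rw [hnext, if_neg (not_lt.mpr hcase)]
        exact ⟨le_max_left _ _, (max_lt hαμ hsq).le, fun _ => max_lt hαμ hsq⟩
  -- invariant
  have inv : ∀ m : ℕ, V L ≤ μ m ∧ μ m ≤ μ 0 := by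
    intro m
    induction m with
    | zero => exact ⟨hμ00.le, le_refl _⟩
    | succ n ih =>
      obtain ⟨ha, hb, _⟩ := step n ih.1 ih.2
      exact ⟨ha, hb.trans ih.2⟩
  refine ⟨fun m => ⟨(step m (inv m).1 (inv m).2).2.1, (step m (inv m).1 (inv m).2).2.2⟩, ?_⟩
  -- finiteness
  by_contra hno
  push_neg at hno
  have hgt : ∀ m, V L < μ m := fun m => lt_of_le_of_ne (inv m).1 (Ne.symm (hno m))
  have hbdd : BddBelow (range μ) := ⟨V L, fun x ⟨m, hm⟩ => hm ▸ (inv m).1⟩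
  set μs : ℝ := ⨅ m, μ m with hμs_def
  have hμsge : V L ≤ μs := le_ciInf fun m => (inv m).1
  have hμsle : μs ≤ μ 0 := ciInf_le hbdd 0
  -- continuity facts
  have hΦdC : Continuous (deriv Φ) :=
    ((contDiff_infty_iff_deriv.mp (hΦ.of_le (by simp))).2).continuous
  have hVC : Continuous V := (hV.differentiable (by simp)).continuous
  have hΦC : Continuous Φ := (hΦ.differentiable (by simp)).continuous
  have hWC : Continuous (Wfn k lam V Φ) := by
    unfold Wfn; fun_prop
  rcases eq_or_lt_of_le hμsge with hA | hB
  · -- inf equals V L : use W L > 0 and Φ small near L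
    have hεden : 0 < lam * (μ 0) ^ 2 + 1 := by positivity
    set ε := Real.sqrt (Wfn k lam V Φ L / (lam * (μ 0) ^ 2 + 1)) with hε_def
    have hεpos : 0 < ε := Real.sqrt_pos.mpr (div_pos hWLpos hεden)
    have hcontL : ∀ᶠ x in nhds L, Φ x < ε := by
      have hca : ContinuousAt Φ L := hΦC.continuousAt
      have hpre := hca.preimage_mem_nhds (Iio_mem_nhds (by rw [hΦL]; exact hεpos))
      filter_upwards [hpre] with x hx
      exact hx
    obtain ⟨η, hη, hball⟩ := Metric.eventually_nhds_iff.mp hcontL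
    set t₀ := max (L - η / 2) (L / 2) with ht₀_def
    have ht₀0 : 0 ≤ t₀ := le_trans (by linarith : (0:ℝ) ≤ L / 2) (le_max_right _ _)
    have ht₀L : t₀ < L := max_lt (by linarith) (by linarith)
    have ht₀I : t₀ ∈ Icc 0 L := ⟨ht₀0, ht₀L.le⟩
    have hVt₀ : V L < V t₀ := hVanti ht₀I hLI ht₀L
    have hμslt : μs < V t₀ := by rw [← hA]; exact hVt₀
    obtain ⟨m, hm⟩ := exists_lt_of_ciInf_lt hμslt
    rcases hrec m with ⟨he, _⟩ | ⟨hne, hy, hnext⟩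
    · exact absurd he (hno m)
    have hαμ : V L < μ m := hgt m
    have hμβ : μ m < V 0 := lt_of_le_of_lt (inv m).2 hμ0V0
    have hmI : μ m ∈ Icc (V L) (V 0) := ⟨(inv m).1, hμβ.le⟩
    set t := z (μ m) with ht_def
    have htIoo : t ∈ Ioo 0 L := ⟨hz_gt_0 _ hmI hμβ, hz_lt_L _ hmI hαμ⟩
    have hVt : V t = μ m := hzval _ hmI
    have hΦt : 0 < Φ t := hΦpos t htIoo
    have htt₀ : t₀ < t := by
      by_contra hcon
      push_neg at hcon
      have := hVanti.antitoneOn ⟨htIoo.1.le, htIoo.2.le⟩ ht₀I hcon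
      rw [hVt] at this
      linarith
    have hdist : dist t L < η := by
      rw [Real.dist_eq, abs_of_nonpos (by linarith [htIoo.2] : t - L ≤ 0)]
      have h1 : L - η / 2 ≤ t₀ := le_max_left _ _
      linarith
    have hΦtε : Φ t < ε := hball hdist
    have hWtWL : Wfn k lam V Φ L ≤ Wfn k lam V Φ t :=
      hWanti ⟨htIoo.1.le, htIoo.2.le⟩ hLI htIoo.2.le
    have hΦt2 : (Φ t) ^ 2 < ε ^ 2 := pow_lt_pow_left₀ hΦtε hΦt.le (by norm_num)
    have hε2 : ε ^ 2 = Wfn k lam V Φ L / (lam * (μ 0) ^ 2 + 1) :=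
      Real.sq_sqrt (le_of_lt (div_pos hWLpos hεden))
    have hΦt2' : (Φ t) ^ 2 < Wfn k lam V Φ L / (lam * (μ 0) ^ 2 + 1) := by
      rw [← hε2]; exact hΦt2
    have h1 : (Φ t) ^ 2 * (lam * (μ 0) ^ 2 + 1) < Wfn k lam V Φ L :=
      (lt_div_iff₀ hεden).mp hΦt2'
    have hμm2 : (μ m) ^ 2 ≤ (μ 0) ^ 2 :=
      pow_le_pow_left₀ (le_of_lt (hVL.trans hαμ)) (inv m).2 2
    have hWLgt : lam * (μ m) ^ 2 * (Φ t) ^ 2 < Wfn k lam V Φ L := by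
      have e1 : lam * (μ m) ^ 2 * (Φ t) ^ 2 ≤ lam * (μ 0) ^ 2 * (Φ t) ^ 2 :=
        mul_le_mul_of_nonneg_right (mul_le_mul_of_nonneg_left hμm2 hlam.le)
          (pow_nonneg hΦt.le 2)
      have e3 : (Φ t) ^ 2 * (lam * (μ 0) ^ 2 + 1)
          = lam * (μ 0) ^ 2 * (Φ t) ^ 2 + (Φ t) ^ 2 := by ring
      linarith only [h1, e3, pow_pos hΦt 2, e1]
    have hy2 : k ^ 2 < (y m) ^ 2 := by
      have eT : Wfn k lam V Φ t
          = (V t * deriv Φ t) ^ 2 - (k ^ 2 - lam * (V t) ^ 2) * (Φ t) ^ 2 := rfl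
      have hW'' : (k ^ 2 - lam * (V t) ^ 2) * (Φ t) ^ 2 + Wfn k lam V Φ L
          ≤ (V t * deriv Φ t) ^ 2 := by
        linarith only [hWtWL, eT]
      have hyeq : (y m) ^ 2 = (V t * deriv Φ t) ^ 2 / (Φ t) ^ 2 := by rw [hy, div_pow]
      rw [hyeq, lt_div_iff₀ (pow_pos hΦt 2)]
      have hWLgt' : lam * (V t) ^ 2 * (Φ t) ^ 2 < Wfn k lam V Φ L := by
        rw [hVt]; exact hWLgt
      have e4 : (k ^ 2 - lam * (V t) ^ 2) * (Φ t) ^ 2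
          = k ^ 2 * (Φ t) ^ 2 - lam * (V t) ^ 2 * (Φ t) ^ 2 := by ring
      linarith only [hW'', hWLgt', e4]
    exact absurd (by rw [hnext, if_pos hy2]) (hno (m + 1))
  · -- inf strictly above V L : uniform decrement
    have hμsV0 : μs < V 0 := lt_of_le_of_lt hμsle hμ0V0
    have hμsI : μs ∈ Icc (V L) (V 0) := ⟨hμsge, hμsV0.le⟩
    have hμ0I : μ 0 ∈ Icc (V L) (V 0) := ⟨hμ00.le, hμ0V0.le⟩
    set a := z (μ 0) with ha_def
    set b := z μs with hb_def
    have ha0 : 0 < a := hz_gt_0 _ hμ0I hμ0V0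
    have hbL : b < L := hz_lt_L _ hμsI hB
    have hab : a ≤ b := hz_anti μs hμsI (μ 0) hμ0I hμsle
    have habIoo : Icc a b ⊆ Ioo 0 L := fun x hx =>
      ⟨lt_of_lt_of_le ha0 hx.1, lt_of_le_of_lt hx.2 hbL⟩
    have hGcont : ContinuousOn (fun s => Wfn k lam V Φ s / (Φ s) ^ 2) (Icc a b) := by
      apply ContinuousOn.div hWC.continuousOn ((hΦC.pow 2).continuousOn)
      intro x hx
      exact pow_ne_zero 2 (ne_of_gt (hΦpos x (habIoo hx)))
    obtain ⟨tc, htcI, htcmin⟩ :=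
      isCompact_Icc.exists_isMinOn ⟨a, le_refl a, hab⟩ hGcont
    set c := Wfn k lam V Φ tc / (Φ tc) ^ 2 with hc_def
    have hcpos : 0 < c := div_pos
      (hWpos tc ⟨(habIoo htcI).1.le, (habIoo htcI).2⟩)
      (pow_pos (hΦpos tc (habIoo htcI)) 2)
    have dec : ∀ m : ℕ, (μ (m + 1)) ^ 2 ≤ (μ m) ^ 2 - c / lam := by
      intro m
      rcases hrec m with ⟨he, _⟩ | ⟨hne, hy, hnext⟩
      · exact absurd he (hno m)
      have hαμ : V L < μ m := hgt m
      have hμβ : μ m < V 0 := lt_of_le_of_lt (inv m).2 hμ0V0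
      have hmI : μ m ∈ Icc (V L) (V 0) := ⟨(inv m).1, hμβ.le⟩
      set t := z (μ m) with ht_def
      have htmem : t ∈ Icc a b :=
        ⟨hz_anti (μ m) hmI (μ 0) hμ0I (inv m).2, hz_anti μs hμsI (μ m) hmI (ciInf_le hbdd m)⟩
      have htIoo : t ∈ Ioo 0 L := habIoo htmem
      have hΦt : 0 < Φ t := hΦpos t htIoo
      have hVt : V t = μ m := hzval _ hmI
      have hcle : c ≤ Wfn k lam V Φ t / (Φ t) ^ 2 := htcmin htmem
      have hW' : c * (Φ t) ^ 2 ≤ Wfn k lam V Φ t := (le_div_iff₀ (pow_pos hΦt 2)).mp hcle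
      have hy2 : k ^ 2 - lam * (μ m) ^ 2 + c ≤ (y m) ^ 2 := by
        have eT : Wfn k lam V Φ t
            = (V t * deriv Φ t) ^ 2 - (k ^ 2 - lam * (V t) ^ 2) * (Φ t) ^ 2 := rfl
        have e5 : (k ^ 2 - lam * (V t) ^ 2 + c) * (Φ t) ^ 2
            = (k ^ 2 - lam * (V t) ^ 2) * (Φ t) ^ 2 + c * (Φ t) ^ 2 := by ring
        have hy2' : (k ^ 2 - lam * (V t) ^ 2 + c) * (Φ t) ^ 2 ≤ (V t * deriv Φ t) ^ 2 := by
          linarith only [hW', eT, e5]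
        have hyeq : (y m) ^ 2 = (V t * deriv Φ t) ^ 2 / (Φ t) ^ 2 := by rw [hy, div_pow]
        rw [hyeq, le_div_iff₀ (pow_pos hΦt 2), ← hVt]
        exact hy2'
      by_cases hcase : k ^ 2 < (y m) ^ 2
      · exfalso
        exact absurd (by rw [hnext, if_pos hcase]) (hno (m + 1))
      · push_neg at hcase
        have hnn : 0 ≤ (k ^ 2 - (y m) ^ 2) / lam := div_nonneg (by linarith) hlam.le
        have hmax : μ (m + 1) = Real.sqrt ((k ^ 2 - (y m) ^ 2) / lam) := by
          rcases le_or_gt (Real.sqrt ((k ^ 2 - (y m) ^ 2) / lam)) (V L) with h | h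
          · exfalso
            exact absurd (by rw [hnext, if_neg (not_lt.mpr hcase)]; exact max_eq_left h)
              (hno (m + 1))
          · rw [hnext, if_neg (not_lt.mpr hcase)]
            exact max_eq_right h.le
        rw [hmax, Real.sq_sqrt hnn, div_le_iff₀ hlam]
        have hcancel : c / lam * lam = c := div_mul_cancel₀ c (ne_of_gt hlam)
        have e6 : ((μ m) ^ 2 - c / lam) * lam = lam * (μ m) ^ 2 - c / lam * lam := by ring
        linarith only [hy2, hcancel, e6]
    have iter : ∀ m : ℕ, (μ m) ^ 2 ≤ (μ 0) ^ 2 - m * (c / lam) := by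
      intro m
      induction m with
      | zero => simp
      | succ n ih =>
        have hd := dec n
        have hcast : ((n + 1 : ℕ) : ℝ) = (n : ℝ) + 1 := by push_cast; ring
        rw [hcast]
        linarith
    obtain ⟨n, hn⟩ := exists_nat_gt ((μ 0) ^ 2 / (c / lam))
    have hclam : 0 < c / lam := div_pos hcpos hlam
    have hlt : (μ 0) ^ 2 < n * (c / lam) := (div_lt_iff₀ hclam).mp hn
    have hiter := iter n
    linarith only [sq_nonneg (μ n), hlt, hiter]
end
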